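/- arXiv:2207.08884 — 6 statements merged into one kernel-verified Lean document; each statement's English description precedes it below -/
import Mathlib

section
/- Let G be a finite directed graph with a distinguished root, and suppose nodes u and v are 'behaviourally equivalent' in the sense that there is a graph isomorphism between the subgraphs reachable from u and from v mapping u to v. Then redirecting all edges into v to point to u, and deleting nodes no longer reachable from the root, yields a graph in which every finite path from the root in the original graph corresponds (under the isomorphism applied at each redirection) to a path from the root in the new graph with the same sequence of edge labels up to the node relabelling. -/
/-- Reachability in a labelled directed graph. -/
def ReachFrom {V L : Type*} (E : V → L → V → Prop) (u : V) : V → Prop :=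
  Relation.ReflTransGen (fun a b => ∃ l, E a l b) u

/-- Finite labelled paths in a directed graph. -/
inductive EPath {V L : Type*} (E : V → L → V → Prop) : V → List L → V → Prop
  | nil (v : V) : EPath E v [] v
  | cons {a : V} {l : L} {b : V} {ls : List L} {c : V} :
      E a l b → EPath E b ls c → EPath E a (l :: ls) c

/-- The graph obtained by redirecting every edge into `v` so that it points to
`u` instead (nodes unreachable from the root may then be deleted, which does not
affect paths from the root). -/
def Redirect {V L : Type*} (E : V → L → V → Prop) (u v : V) : V → L → V → Prop :=
  fun a l b => (E a l b ∧ b ≠ v) ∨ (E a l v ∧ b = u)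

/-!
A path from the root is followed in the redirected graph node by node, until it first enters `v`;
there the redirected copy moves to `u` instead. From then on the original node is the image of
the copy under a surjective renaming `f` that preserves and reflects edges out of the part
reachable from `u`: initially `f = M`, and each further entry into `v` (which can only happen once
`v` is reachable from `u`, so that `M` maps that part into itself) replaces `f` by `f ∘ M`.
-/

theorem EPath.exists_of_simulation {V W L : Type*} {E : V → L → V → Prop}
    {E' : W → L → W → Prop} (R : V → W → Prop)
    (hR : ∀ a a' l b, R a a' → E a l b → ∃ b', E' a' l b' ∧ R b b')
    {a b : V} {ls : List L} (hp : EPath E a ls b) {a' : W} (ha : R a a') :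
    ∃ b', EPath E' a' ls b' ∧ R b b' := by
  induction hp generalizing a' with
  | nil => exact ⟨a', .nil a', ha⟩
  | cons he _ ih =>
    obtain ⟨c', he', hc⟩ := hR _ _ _ _ ha he
    obtain ⟨b', hp', hb⟩ := ih hc
    exact ⟨b', .cons he' hp', hb⟩

section Redirect

variable {V L : Type*} {E : V → L → V → Prop} {u v : V}

theorem ReachFrom.of_edge {a b : V} {l : L} (ha : ReachFrom E u a) (he : E a l b) :
    ReachFrom E u b :=
  ha.tail ⟨l, he⟩

def RespectsEdgesOn (E : V → L → V → Prop) (S : Set V) (f : V → V) : Prop :=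
  ∀ x ∈ S, ∀ l y, E x l y ↔ E (f x) l (f y)

theorem RespectsEdgesOn.comp {S : Set V} {f g : V → V}
    (hf : RespectsEdgesOn E S f) (hg : RespectsEdgesOn E S g) (hgS : Set.MapsTo g S S) :
    RespectsEdgesOn E S (f ∘ g) :=
  fun x hx l y => (hg x hx l y).trans (hf (g x) (hgS hx) l (g y))

/-- The copy `w'` in `Redirect E u v` of a node `a` of `E`. -/
def RedirectSim (E : V → L → V → Prop) (u v : V) (a w' : V) : Prop :=
  (w' = a ∧ a ≠ v) ∨
    ∃ f : V → V, f.Surjective ∧ RespectsEdgesOn E {x | ReachFrom E u x} f ∧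
      ReachFrom E u w' ∧ f w' = a

theorem RedirectSim.step {M : V → V} (hM : M.Surjective) (huv : M u = v)
    (hiso : RespectsEdgesOn E {x | ReachFrom E u x} M)
    (hMreach : ∀ x, ReachFrom E u x → ReachFrom E v (M x))
    {a w' b : V} {l : L} (hs : RedirectSim E u v a w') (he : E a l b) :
    ∃ b', Redirect E u v w' l b' ∧ RedirectSim E u v b b' := by
  rcases hs with ⟨rfl, -⟩ | ⟨f, hf, hfE, hw, rfl⟩
  · by_cases hb : b = v
    · subst hb
      exact ⟨u, .inr ⟨he, rfl⟩, .inr ⟨M, hM, hiso, .refl, huv⟩⟩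
    · exact ⟨b, .inl ⟨he, hb⟩, .inl ⟨rfl, hb⟩⟩
  · obtain ⟨z, rfl⟩ := hf b
    have hz : E w' l z := (hfE w' hw l z).2 he
    have hzS : ReachFrom E u z := hw.of_edge hz
    by_cases hzv : z = v
    · subst hzv
      -- `v` is now reachable from `u`, so `M` maps the part reachable from `u` into itself.
      have hMS : Set.MapsTo M {x | ReachFrom E u x} {x | ReachFrom E u x} :=
        fun x hx => Relation.ReflTransGen.trans hzS (hMreach x hx)
      exact ⟨u, .inr ⟨hz, rfl⟩,
        .inr ⟨f ∘ M, hf.comp hM, hfE.comp hiso hMS, .refl, by simp [huv]⟩⟩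
    · exact ⟨z, .inl ⟨hz, hzv⟩, .inr ⟨f, hf, hfE, hzS, rfl⟩⟩

end Redirect

theorem stmt3_general {V L : Type*} (E : V → L → V → Prop) (r u v : V) (M : V → V)
    (hbij : Function.Bijective M) (huv : M u = v) (hrv : r ≠ v)
    (hiso : ∀ x, ReachFrom E u x → ∀ l y, E x l y ↔ E (M x) l (M y))
    (hMreach : ∀ x, ReachFrom E u x → ReachFrom E v (M x)) :
    ∀ (ls : List L) (w : V), EPath E r ls w →
      ∃ w', EPath (Redirect E u v) r ls w' := by
  intro ls w hp
  obtain ⟨w', hp', -⟩ := hp.exists_of_simulation (E' := Redirect E u v) (RedirectSim E u v)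
    (fun _ _ _ _ hs he => hs.step hbij.surjective huv hiso hMreach he) (.inl ⟨rfl, hrv⟩)
  exact ⟨w', hp'⟩

/-- If the subgraphs reachable from `u` and from `v` are isomorphic via a
bijective node-renaming `M` with `M u = v`, then every finite path from the
root `r` in the original graph corresponds to a path from `r` in the graph
obtained by redirecting all edges into `v` to point to `u`, with the same
sequence of edge labels. -/
theorem stmt3 {V L : Type*} [Finite V] (E : V → L → V → Prop) (r u v : V) (M : V → V)
    (hbij : Function.Bijective M) (huv : M u = v) (hrv : r ≠ v)
    (hiso : ∀ x, ReachFrom E u x → ∀ l y, E x l y ↔ E (M x) l (M y))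
    (hMreach : ∀ x, ReachFrom E u x → ReachFrom E v (M x)) :
    ∀ (ls : List L) (w : V), EPath E r ls w →
      ∃ w', EPath (Redirect E u v) r ls w' :=
  stmt3_general E r u v M hbij huv hrv hiso hMreach
end

section
/- If two networks N and N' are equivalent via a bijective process-renaming M (every process p of N has main behaviour B iff M(p) has main behaviour M(B)), then for any transition N →λ N'' there is a transition N' →M(λ) N''' such that N'' and N''' are equivalent via M, where M(λ) renames all process names in λ. -/
/-- Process behaviours: send, receive, selection, branching, conditional, and
termination. `P` are process names, `L` labels for selections, `E` expressions. -/
inductive Behaviour (P L E : Type*) where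
  | nil : Behaviour P L E
  | send : P → E → Behaviour P L E → Behaviour P L E
  | recv : P → Behaviour P L E → Behaviour P L E
  | sel : P → L → Behaviour P L E → Behaviour P L E
  | branch : P → (L → Behaviour P L E) → Behaviour P L E
  | cond : E → Behaviour P L E → Behaviour P L E → Behaviour P L E

/-- Renaming all process names occurring in a behaviour along `M`. -/
def Behaviour.rename {P L E : Type*} (M : P ≃ P) : Behaviour P L E → Behaviour P L E
  | nil => nil
  | send p e B => send (M p) e (B.rename M)
  | recv p B => recv (M p) (B.rename M)
  | sel p l B => sel (M p) l (B.rename M)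
  | branch p Bs => branch (M p) (fun l => (Bs l).rename M)
  | cond e B1 B2 => cond e (B1.rename M) (B2.rename M)

/-- Transition labels, recording the processes and action involved. -/
inductive NLabel (P L E : Type*) where
  | com : P → E → P → NLabel P L E
  | sel : P → P → L → NLabel P L E
  | tthen : P → E → NLabel P L E
  | telse : P → E → NLabel P L E

/-- Renaming process names in a transition label. -/
def NLabel.rename {P L E : Type*} (M : P ≃ P) : NLabel P L E → NLabel P L E
  | com p e q => com (M p) e (M q)
  | sel p q l => sel (M p) (M q) l
  | tthen p e => tthen (M p) e
  | telse p e => telse (M p) e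

/-- Network transitions: communication, selection, and conditional steps. -/
inductive NStep {P L E : Type*} [DecidableEq P] :
    (P → Behaviour P L E) → NLabel P L E → (P → Behaviour P L E) → Prop
  | com {N : P → Behaviour P L E} {p q : P} {e : E} {B1 B2 : Behaviour P L E} :
      p ≠ q → N p = .send q e B1 → N q = .recv p B2 →
      NStep N (.com p e q) (Function.update (Function.update N p B1) q B2)
  | sel {N : P → Behaviour P L E} {p q : P} {l : L} {B : Behaviour P L E}
      {Bs : L → Behaviour P L E} :
      p ≠ q → N p = .sel q l B → N q = .branch p Bs →
      NStep N (.sel p q l) (Function.update (Function.update N p B) q (Bs l))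
  | tthen {N : P → Behaviour P L E} {p : P} {e : E} {B1 B2 : Behaviour P L E} :
      N p = .cond e B1 B2 → NStep N (.tthen p e) (Function.update N p B1)
  | telse {N : P → Behaviour P L E} {p : P} {e : E} {B1 B2 : Behaviour P L E} :
      N p = .cond e B1 B2 → NStep N (.telse p e) (Function.update N p B2)

def EquivVia {P L E : Type*} (M : P ≃ P) (N N' : P → Behaviour P L E) : Prop :=
  ∀ p, N' (M p) = (N p).rename M

namespace EquivVia

variable {P L E : Type*} {M : P ≃ P} {N N' : P → Behaviour P L E}

theorem apply_eq_rename (h : EquivVia M N N') {p : P} {B : Behaviour P L E} (hp : N p = B) :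
    N' (M p) = B.rename M :=
  hp ▸ h p

theorem update [DecidableEq P] (h : EquivVia M N N') (q : P) (B : Behaviour P L E) :
    EquivVia M (Function.update N q B) (Function.update N' (M q) (B.rename M)) := by
  intro p
  rcases eq_or_ne p q with rfl | hpq
  · simp
  · simp [hpq, h p]

end EquivVia

/-- If `N` and `N'` are equivalent via a bijective process-renaming `M`, then
any transition of `N` is matched by a transition of `N'` with the renamed
label, resulting in networks again equivalent via `M`. -/
theorem stmt4 {P L E : Type*} [DecidableEq P] (M : P ≃ P)
    (N N' : P → Behaviour P L E)
    (hequiv : ∀ p, N' (M p) = (N p).rename M)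
    (lab : NLabel P L E) (N'' : P → Behaviour P L E)
    (hstep : NStep N lab N'') :
    ∃ N''', NStep N' (lab.rename M) N''' ∧ ∀ p, N''' (M p) = (N'' p).rename M := by
  have h : EquivVia M N N' := hequiv
  -- `Behaviour.rename` unfolds on constructors, so `h.apply_eq_rename` matches the premises
  -- of the renamed step rule definitionally.
  cases hstep with
  | com hne hp hq =>
    exact ⟨_, .com (M.injective.ne hne) (h.apply_eq_rename hp) (h.apply_eq_rename hq),
      (h.update _ _).update _ _⟩
  | sel hne hp hq =>
    exact ⟨_, .sel (M.injective.ne hne) (h.apply_eq_rename hp) (h.apply_eq_rename hq),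
      (h.update _ _).update _ _⟩
  | tthen hp => exact ⟨_, .tthen (h.apply_eq_rename hp), h.update _ _⟩
  | telse hp => exact ⟨_, .telse (h.apply_eq_rename hp), h.update _ _⟩
end

section
/- Let labels be equipped with a function pn giving the finite set of process names involved. If λ and λ' satisfy pn(λ) ∩ pn(λ') = ∅, and in the choreography semantics transitions with label λ only modify/inspect the state and connection-graph entries of processes in pn(λ), then executing λ then λ' from a configuration reaches the same configuration as executing λ' then λ. -/
/-- A configuration: a state assigning values to processes, together with a
connection graph (a set of unordered pairs of processes). -/
structure Config (P V : Type*) where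
  st : P → V
  G : Set (Sym2 P)

/-- An unordered edge lies entirely within a set of processes. -/
def Within {P : Type*} (s : Finset P) (e : Sym2 P) : Prop := ∀ p ∈ e, p ∈ s

/-- Locality of the action of label `l`: its definedness and effect depend only
on the state of the processes in `pn l` and the edges within `pn l`, and it
modifies only those. -/
def LocalAct {P V Λ : Type*} (pn : Λ → Finset P)
    (act : Λ → Config P V → Option (Config P V)) (l : Λ) : Prop :=
  (∀ c c' : Config P V,
    (∀ p ∈ pn l, c.st p = c'.st p) →
    (∀ e : Sym2 P, Within (pn l) e → (e ∈ c.G ↔ e ∈ c'.G)) →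
    ((act l c).isSome ↔ (act l c').isSome) ∧
    ∀ d d', act l c = some d → act l c' = some d' →
      (∀ p ∈ pn l, d.st p = d'.st p) ∧
      (∀ e : Sym2 P, Within (pn l) e → (e ∈ d.G ↔ e ∈ d'.G))) ∧
  (∀ c d, act l c = some d →
    (∀ p ∉ pn l, d.st p = c.st p) ∧
    (∀ e : Sym2 P, ¬ Within (pn l) e → (e ∈ d.G ↔ e ∈ c.G)))

/-!
Let `d₁ = λ c` and `d = λ' d₁`. Since `λ` only writes inside `pn λ`, the configurations `c` and
`d₁` agree inside `pn λ'`, so by locality `λ'` is also enabled at `c`, giving `d₁' = λ' c`;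
symmetrically `λ` is enabled at `d₁'`, giving `d' = λ d₁'`. Then `d'` and `d` agree inside `pn λ`
(both are images under `λ` of configurations agreeing there, and `λ'` does not touch it), inside
`pn λ'` by the symmetric argument, and off both sets, where neither action writes; hence `d' = d`.
-/

lemma Within.not_within_of_disjoint {P : Type*} {s t : Finset P} {e : Sym2 P}
    (hs : Within s e) (hst : Disjoint s t) : ¬ Within t e :=
  fun ht => Finset.disjoint_left.mp hst (hs _ e.out_fst_mem) (ht _ e.out_fst_mem)

namespace Config

variable {P V : Type*}

def AgreeOn (S : Set P) (E : Set (Sym2 P)) (c c' : Config P V) : Prop :=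
  Set.EqOn c.st c'.st S ∧ Set.EqOn (· ∈ c.G) (· ∈ c'.G) E

abbrev AgreeIn (s : Finset P) : Config P V → Config P V → Prop :=
  AgreeOn (s : Set P) {e | Within s e}

abbrev AgreeOff (s : Finset P) : Config P V → Config P V → Prop :=
  AgreeOn (s : Set P)ᶜ {e | Within s e}ᶜ

variable {S S' : Set P} {E E' : Set (Sym2 P)} {c c' c'' : Config P V}

lemma AgreeOn.symm (h : AgreeOn S E c c') : AgreeOn S E c' c :=
  ⟨h.1.symm, h.2.symm⟩

lemma AgreeOn.trans (h : AgreeOn S E c c') (h' : AgreeOn S E c' c'') : AgreeOn S E c c'' :=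
  ⟨h.1.trans h'.1, h.2.trans h'.2⟩

lemma AgreeOn.mono (h : AgreeOn S E c c') (hS : S' ⊆ S) (hE : E' ⊆ E) :
    AgreeOn S' E' c c' :=
  ⟨h.1.mono hS, h.2.mono hE⟩

lemma AgreeOn.inter_left (h : AgreeOn S E c c') : AgreeOn (S ∩ S') (E ∩ E') c c' :=
  h.mono Set.inter_subset_left Set.inter_subset_left

lemma AgreeOn.inter_right (h : AgreeOn S E c c') : AgreeOn (S' ∩ S) (E' ∩ E) c c' :=
  h.mono Set.inter_subset_right Set.inter_subset_right

lemma AgreeOn.union (h : AgreeOn S E c c') (h' : AgreeOn S' E' c c') :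
    AgreeOn (S ∪ S') (E ∪ E') c c' :=
  ⟨h.1.union h'.1, h.2.union h'.2⟩

lemma eq_of_agreeOn_univ (h : AgreeOn Set.univ Set.univ c c') : c = c' := by
  obtain ⟨st, G⟩ := c
  obtain ⟨st', G'⟩ := c'
  obtain rfl : st = st' := funext fun p => h.1 (Set.mem_univ p)
  obtain rfl : G = G' := Set.ext fun e => (h.2 (Set.mem_univ e)).to_iff
  rfl

lemma AgreeOff.agreeIn_of_disjoint {s t : Finset P} (h : AgreeOff s c c') (hst : Disjoint s t) :
    AgreeIn t c c' :=
  h.mono (fun _ hp => Finset.disjoint_right.mp hst hp)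
    fun _ he => Within.not_within_of_disjoint he hst.symm

-- An edge joining `s` to `t` lies within neither, so it is covered by `hst`.
lemma eq_of_agreeIn_of_agreeIn_of_agreeOff {s t : Finset P} (hs : AgreeIn s c c')
    (ht : AgreeIn t c c') (hst : AgreeOn ((s : Set P)ᶜ ∩ (t : Set P)ᶜ)
      ({e | Within s e}ᶜ ∩ {e | Within t e}ᶜ) c c') : c = c' := by
  refine eq_of_agreeOn_univ ((hs.union (ht.union hst)).mono (fun p _ => ?_) fun e _ => ?_)
  · by_cases p ∈ s <;> by_cases p ∈ t <;> simp_all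
  · by_cases Within s e <;> by_cases Within t e <;> simp_all

end Config

open Config

namespace LocalAct

variable {P V Λ : Type*} {pn : Λ → Finset P} {act : Λ → Config P V → Option (Config P V)}
  {l : Λ} {c c' d d' : Config P V}

lemma isSome_iff (hl : LocalAct pn act l) (h : AgreeIn (pn l) c c') :
    (act l c).isSome ↔ (act l c').isSome :=
  (hl.1 c c' (fun _ hp => h.1 hp) fun _ he => (h.2 he).to_iff).1

lemma agreeIn_of_eq_some (hl : LocalAct pn act l) (h : AgreeIn (pn l) c c')
    (hd : act l c = some d) (hd' : act l c' = some d') : AgreeIn (pn l) d d' :=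
  have hagree := (hl.1 c c' (fun _ hp => h.1 hp) fun _ he => (h.2 he).to_iff).2 d d' hd hd'
  ⟨fun _ hp => hagree.1 _ hp, fun e he => propext (hagree.2 e he)⟩

lemma agreeOff_of_eq_some (hl : LocalAct pn act l) (hd : act l c = some d) :
    AgreeOff (pn l) d c :=
  have frame := hl.2 c d hd
  ⟨fun _ hp => frame.1 _ hp, fun e he => propext (frame.2 e he)⟩

lemma bind_swap_eq_some {l' : Λ} (hl : LocalAct pn act l) (hl' : LocalAct pn act l')
    (hdisj : Disjoint (pn l) (pn l')) (h : (act l c).bind (act l') = some d) :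
    (act l' c).bind (act l) = some d := by
  obtain ⟨d₁, hd₁, hd⟩ := Option.bind_eq_some_iff.mp h
  have hd₁c : AgreeOff (pn l) d₁ c := hl.agreeOff_of_eq_some hd₁
  have hdd₁ : AgreeOff (pn l') d d₁ := hl'.agreeOff_of_eq_some hd
  obtain ⟨d₁', hd₁'⟩ := Option.isSome_iff_exists.mp <|
    (hl'.isSome_iff (hd₁c.agreeIn_of_disjoint hdisj)).mp (by simp [hd])
  have hd₁'c : AgreeOff (pn l') d₁' c := hl'.agreeOff_of_eq_some hd₁'
  obtain ⟨d', hd'⟩ := Option.isSome_iff_exists.mp <|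
    (hl.isSome_iff (hd₁'c.agreeIn_of_disjoint hdisj.symm).symm).mp (by simp [hd₁])
  have hd'd₁' : AgreeOff (pn l) d' d₁' := hl.agreeOff_of_eq_some hd'
  suffices d' = d by simp [hd₁', hd', this]
  refine eq_of_agreeIn_of_agreeIn_of_agreeOff (s := pn l) (t := pn l') ?_ ?_ ?_
  · exact (hl.agreeIn_of_eq_some (hd₁'c.agreeIn_of_disjoint hdisj.symm) hd' hd₁).trans
      (hdd₁.agreeIn_of_disjoint hdisj.symm).symm
  · exact (hd'd₁'.agreeIn_of_disjoint hdisj).trans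
      (hl'.agreeIn_of_eq_some (hd₁c.agreeIn_of_disjoint hdisj).symm hd₁' hd)
  · exact hd'd₁'.inter_left.trans <| hd₁'c.inter_right.trans <|
      hd₁c.inter_left.symm.trans hdd₁.inter_right.symm

end LocalAct

/-- Executing two local actions whose sets of involved processes are disjoint
commutes: either composition is defined iff the other is, and both reach the
same configuration. -/
theorem stmt7 {P V Λ : Type*} (pn : Λ → Finset P)
    (act : Λ → Config P V → Option (Config P V)) (l l' : Λ)
    (hl : LocalAct pn act l) (hl' : LocalAct pn act l')
    (hdisj : Disjoint (pn l) (pn l')) :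
    ∀ c : Config P V, (act l c).bind (act l') = (act l' c).bind (act l) :=
  fun _ => Option.ext fun _ =>
    ⟨hl.bind_swap_eq_some hl' hdisj, hl'.bind_swap_eq_some hl hdisj.symm⟩
end

section
/- In the unrolled graph obtained from a finite rooted directed graph by splitting loop nodes into entry and exit nodes, every maximal path starting from an entry node (or from the root) is finite and ends either at a node of out-degree zero inherited from the original graph or at an exit node. -/
open Classical in
/-- In-degree of a node in an edge set of a labelled directed multigraph. -/
noncomputable def indeg {V L : Type*} (E : Finset (V × L × V)) (v : V) : ℕ :=
  (E.filter (fun e => e.2.2 = v)).card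

/-- A loop node: a node with in-degree at least 2, or the root if it has any
incoming edge. -/
def IsLoopNode {V L : Type*} (E : Finset (V × L × V)) (r v : V) : Prop :=
  2 ≤ indeg E v ∨ (v = r ∧ 1 ≤ indeg E v)

open Classical in
/-- Unrolling: every loop node `v` is split into an entry node `Sum.inl v`
(keeping `v`'s outgoing edges) and an exit node `Sum.inr v` (receiving `v`'s
incoming edges, with no outgoing edges). Non-loop nodes `w` are kept as
`Sum.inl w`. -/
noncomputable def unroll {V L : Type*} (E : Finset (V × L × V)) (r : V) :
    Finset ((V ⊕ V) × L × (V ⊕ V)) :=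
  E.image (fun e => (Sum.inl e.1, e.2.1,
    if IsLoopNode E r e.2.2 then Sum.inr e.2.2 else Sum.inl e.2.2))

/-- Finite labelled paths along a finite edge set. -/
inductive FPath {V L : Type*} (E : Finset (V × L × V)) : V → List L → V → Prop
  | nil (v : V) : FPath E v [] v
  | cons {a : V} {l : L} {b : V} {ls : List L} {c : V} :
      (a, l, b) ∈ E → FPath E b ls c → FPath E a (l :: ls) c

/-!
An infinite path in the unrolled graph never enters an exit node, since exit nodes have no
outgoing edges. It therefore projects to an infinite path `v₀ → v₁ → ⋯` of the original graph
whose nodes `v₁, v₂, …` are not loop nodes: each of them differs from the root and has the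
previous node as its only predecessor. Following a path from the root then shows that a node
reachable in `k` steps occurs among the `vᵢ` only for `i ≤ k`; since every node is reachable and
there are finitely many nodes, some `vᵢ` would be no node at all.

A finite maximal path ends at an exit node or at an entry node `entry(u)` without outgoing
unrolled edges; every original edge `u → w` yields an unrolled edge out of `entry(u)`, so `u` has
out-degree zero in the original graph.
-/

open Filter Relation

section UniquePredecessor

variable {V : Type*} {R : V → V → Prop} {r : V}

/-- A node reachable from `r` in `k` steps occurs in `g` only at indices `≤ k`. -/
theorem eventually_seq_ne_of_reflTransGen (g : ℕ → V) (hroot : ∀ i, g (i + 1) ≠ r)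
    (hpred : ∀ i b, R b (g (i + 1)) → b = g i) {c : V} (hc : ReflTransGen R r c) :
    ∀ᶠ i in atTop, g i ≠ c := by
  rw [eventually_atTop]
  induction hc with
  | refl =>
    refine ⟨1, fun i hi => ?_⟩
    obtain ⟨j, rfl⟩ := Nat.exists_eq_add_of_le' hi
    exact hroot j
  | @tail b c _ hbc ih =>
    obtain ⟨N, hN⟩ := ih
    refine ⟨N + 1, fun i hi hgc => ?_⟩
    obtain ⟨j, rfl⟩ := Nat.exists_eq_add_of_le' (le_of_add_le_right hi)
    exact hN j (by omega) (hpred j b (hgc ▸ hbc)).symm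

theorem exists_not_reflTransGen_of_seq [Finite V] (g : ℕ → V) (hroot : ∀ i, g (i + 1) ≠ r)
    (hpred : ∀ i b, R b (g (i + 1)) → b = g i) : ∃ c, ¬ ReflTransGen R r c := by
  by_contra! hreach
  have hall : ∀ᶠ i in atTop, ∀ c, g i ≠ c :=
    eventually_all.2 fun c => eventually_seq_ne_of_reflTransGen g hroot hpred (hreach c)
  obtain ⟨i, hi⟩ := hall.exists
  exact hi (g i) rfl

end UniquePredecessor

section Unroll

open Classical

variable {V L : Type*} {E : Finset (V × L × V)} {r : V}

theorem exists_of_mem_unroll {x y : V ⊕ V} {l : L} (h : (x, l, y) ∈ unroll E r) :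
    ∃ u w, x = Sum.inl u ∧ (u, l, w) ∈ E ∧
      y = if IsLoopNode E r w then Sum.inr w else Sum.inl w := by
  obtain ⟨⟨u, l', w⟩, he, hx⟩ := Finset.mem_image.1 h
  simp only [Prod.mk.injEq] at hx
  obtain ⟨rfl, rfl, rfl⟩ := hx
  exact ⟨u, w, rfl, he, rfl⟩

theorem exists_mem_unroll_of_mem {u w : V} {l : L} (h : (u, l, w) ∈ E) :
    ∃ y, (Sum.inl u, l, y) ∈ unroll E r :=
  ⟨_, Finset.mem_image_of_mem _ h⟩

theorem ne_root_of_not_isLoopNode {u w : V} {l : L} (hw : ¬ IsLoopNode E r w)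
    (h : (u, l, w) ∈ E) : w ≠ r := by
  rintro rfl
  refine hw (Or.inr ⟨rfl, Finset.card_pos.2 ⟨(u, l, w), ?_⟩⟩)
  simp [h]

theorem eq_of_not_isLoopNode {a b w : V} {l l' : L} (hw : ¬ IsLoopNode E r w)
    (ha : (a, l, w) ∈ E) (hb : (b, l', w) ∈ E) : a = b := by
  have hle : indeg E w ≤ 1 := by
    by_contra! h
    exact hw (Or.inl h)
  exact congrArg Prod.fst
    (Finset.card_le_one.1 hle (a, l, w) (by simp [ha]) (b, l', w) (by simp [hb]))

theorem exists_seq_of_unroll_path {f : ℕ → V ⊕ V}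
    (hf : ∀ i, ∃ l, (f i, l, f (i + 1)) ∈ unroll E r) :
    ∃ (g : ℕ → V) (l : ℕ → L), ∀ i, (g i, l i, g (i + 1)) ∈ E ∧ ¬ IsLoopNode E r (g (i + 1)) := by
  choose l hl using hf
  choose u w hu hE hw using fun i => exists_of_mem_unroll (hl i)
  refine ⟨u, l, fun i => ?_⟩
  have hnext := hw i
  rw [hu (i + 1)] at hnext
  by_cases hloop : IsLoopNode E r (w i)
  · simp [hloop] at hnext
  · rw [if_neg hloop, Sum.inl_injective.eq_iff] at hnext
    exact ⟨hnext ▸ hE i, hnext ▸ hloop⟩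

end Unroll

theorem stmt9_general {V L : Type*} [Fintype V]
    (E : Finset (V × L × V)) (r : V)
    (hreach : ∀ v : V, Relation.ReflTransGen (fun a b => ∃ l, (a, l, b) ∈ E) r v)
    (start : V) :
    (¬ ∃ f : ℕ → (V ⊕ V), f 0 = Sum.inl start ∧
        ∀ i, ∃ l, (f i, l, f (i + 1)) ∈ unroll E r) ∧
    (∀ (ls : List L) (x : V ⊕ V), FPath (unroll E r) (Sum.inl start) ls x →
      (∀ (l : L) (y : V ⊕ V), (x, l, y) ∉ unroll E r) →
      (∃ v, x = Sum.inr v) ∨ (∃ w, x = Sum.inl w ∧ ∀ (l : L) (y : V), (w, l, y) ∉ E)) := by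
  refine ⟨?_, fun ls x _ hmax => ?_⟩
  · rintro ⟨f, -, hf⟩
    obtain ⟨g, l, hg⟩ := exists_seq_of_unroll_path hf
    obtain ⟨c, hc⟩ :=
      exists_not_reflTransGen_of_seq (R := fun a b => ∃ l, (a, l, b) ∈ E) (r := r) g
      (fun i => ne_root_of_not_isLoopNode (hg i).2 (hg i).1)
      (fun i b ⟨_, hb⟩ => eq_of_not_isLoopNode (hg i).2 hb (hg i).1)
    exact hc (hreach c)
  · rcases x with u | v
    · refine Or.inr ⟨u, rfl, fun l y hy => ?_⟩
      obtain ⟨z, hz⟩ := exists_mem_unroll_of_mem (r := r) hy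
      exact hmax l z hz
    · exact Or.inl ⟨v, rfl⟩

/-- In the unrolled graph, every maximal path starting from an entry node (or
from the root) is finite — there is no infinite path from the start node — and
it ends either at a node that had out-degree zero in the original graph or at
an exit node. -/
theorem stmt9 {V L : Type*} [Fintype V] [DecidableEq V] [DecidableEq L]
    (E : Finset (V × L × V)) (r : V)
    (hreach : ∀ v : V, Relation.ReflTransGen (fun a b => ∃ l, (a, l, b) ∈ E) r v)
    (start : V) (hstart : IsLoopNode E r start ∨ start = r) :
    (¬ ∃ f : ℕ → (V ⊕ V), f 0 = Sum.inl start ∧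
        ∀ i, ∃ l, (f i, l, f (i + 1)) ∈ unroll E r) ∧
    (∀ (ls : List L) (x : V ⊕ V), FPath (unroll E r) (Sum.inl start) ls x →
      (∀ (l : L) (y : V ⊕ V), (x, l, y) ∉ unroll E r) →
      (∃ v, x = Sum.inr v) ∨ (∃ w, x = Sum.inl w ∧ ∀ (l : L) (y : V), (w, l, y) ∉ E)) :=
  stmt9_general E r hreach start
end

section
/- If every transition of a network strictly decreases or preserves a multiset measure assigning to each process the size of its current behaviour (with procedure unfolding bounded by a fixed finite set of definitions, and no spawn actions), then the symbolic execution of a spawn-free network visits only finitely many distinct networks up to renaming. -/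
/-- Behaviours over process names `P`, selection labels `L`, expressions `E`,
and procedure names `X` (no spawn actions). -/
inductive Beh (P L E X : Type*) where
  | nil : Beh P L E X
  | send : P → E → Beh P L E X → Beh P L E X
  | recv : P → Beh P L E X → Beh P L E X
  | sel : P → L → Beh P L E X → Beh P L E X
  | branch : P → List (L × Beh P L E X) → Beh P L E X
  | cond : E → Beh P L E X → Beh P L E X → Beh P L E X
  | call : X → Beh P L E X

/-- One step from a behaviour to a continuation: either take an immediate
subterm (continuation of a send/receive/selection, a branch, or a branch of a
conditional), or unfold a procedure call using the finite set `D` of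
definitions. -/
inductive BStep {P L E X : Type*} (D : X → Beh P L E X) :
    Beh P L E X → Beh P L E X → Prop
  | send {p e B} : BStep D (.send p e B) B
  | recv {p B} : BStep D (.recv p B) B
  | sel {p l B} : BStep D (.sel p l B) B
  | branch {p bs l B} : (l, B) ∈ bs → BStep D (.branch p bs) B
  | condT {e B1 B2} : BStep D (.cond e B1 B2) B1
  | condF {e B1 B2} : BStep D (.cond e B1 B2) B2
  | unfold {x} : BStep D (.call x) (D x)

/-!
A step either descends to an immediate subterm or jumps to one of the finitely many
bodies `D x`. Hence every behaviour reachable from `B` is a subterm of `B` or of some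
`D x`, and a term has only finitely many subterms because the immediate-subterm
relation is well founded and finitely branching.
-/

open Relation

namespace Relation

variable {α : Type*}

theorem finite_setOf_reflTransGen_of_wellFounded {R : α → α → Prop}
    (hwf : WellFounded (flip R)) (hfin : ∀ a, {b | R a b}.Finite) (a : α) :
    {b | ReflTransGen R a b}.Finite := by
  induction a using hwf.induction with
  | _ a ih =>
    have hunfold : {b | ReflTransGen R a b} =
        insert a (⋃ c ∈ {c | R a c}, {b | ReflTransGen R c b}) := by
      ext b
      rw [Set.mem_ofPred_eq, ReflTransGen.cases_head_iff]
      simp [eq_comm]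
    rw [hunfold]
    exact ((hfin a).biUnion ih).insert a

theorem setOf_reflTransGen_subset_of_forall_or_mem {R S : α → α → Prop} {T : Set α}
    (h : ∀ a b, R a b → S a b ∨ b ∈ T) (a : α) :
    {b | ReflTransGen R a b} ⊆
      {b | ReflTransGen S a b} ∪ ⋃ t ∈ T, {b | ReflTransGen S t b} := by
  intro b hab
  induction hab with
  | refl => exact Or.inl ReflTransGen.refl
  | tail _ hbc ih =>
    rcases h _ _ hbc with hS | hT
    · simp only [Set.mem_union, Set.mem_ofPred_eq, Set.mem_iUnion, exists_prop] at ih ⊢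
      rcases ih with ih | ⟨t, ht, ih⟩
      · exact Or.inl (ih.tail hS)
      · exact Or.inr ⟨t, ht, ih.tail hS⟩
    · exact Or.inr (Set.mem_biUnion hT ReflTransGen.refl)

end Relation

namespace Beh

variable {P L E X : Type*}

def children : Beh P L E X → List (Beh P L E X)
  | .send _ _ B | .recv _ B | .sel _ _ B => [B]
  | .branch _ bs => bs.map Prod.snd
  | .cond _ B₁ B₂ => [B₁, B₂]
  | .nil | .call _ => []

theorem sizeOf_lt_of_mem_children {b c : Beh P L E X} (h : c ∈ b.children) :
    sizeOf c < sizeOf b := by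
  cases b with
  | branch p bs =>
    obtain ⟨⟨l, c⟩, hmem, rfl⟩ := List.mem_map.mp h
    have := List.sizeOf_lt_of_mem hmem
    simp only [Prod.mk.sizeOf_spec] at this
    simp only [branch.sizeOf_spec]
    omega
  | cond e B₁ B₂ =>
    simp only [children, List.mem_cons, List.not_mem_nil, or_false] at h
    rcases h with rfl | rfl <;> simp only [cond.sizeOf_spec] <;> omega
  | _ => simp_all [children]

theorem finite_setOf_subterm (b : Beh P L E X) :
    {c | ReflTransGen (fun b c => c ∈ children b) b c}.Finite :=
  finite_setOf_reflTransGen_of_wellFounded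
    (Subrelation.wf sizeOf_lt_of_mem_children (measure sizeOf).wf)
    (fun a => a.children.finite_toSet) b

end Beh

theorem BStep.mem_children_or_mem_range {P L E X : Type*} {D : X → Beh P L E X}
    {b c : Beh P L E X} (h : BStep D b c) : c ∈ b.children ∨ c ∈ Set.range D := by
  cases h with
  | branch hmem => exact Or.inl (List.mem_map.mpr ⟨_, hmem, rfl⟩)
  | unfold => exact Or.inr ⟨_, rfl⟩
  | _ => simp [Beh.children]

theorem finite_setOf_reflTransGen_bStep {P L E X : Type*} [Finite X]
    (D : X → Beh P L E X) (B : Beh P L E X) :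
    {B' | ReflTransGen (BStep D) B B'}.Finite :=
  ((Beh.finite_setOf_subterm B).union
      ((Set.finite_range D).biUnion fun t _ => Beh.finite_setOf_subterm t)).subset
    (setOf_reflTransGen_subset_of_forall_or_mem
      (fun _ _ h => h.mem_children_or_mem_range) B)

/-- With finitely many procedure names and no spawning, the set of behaviours
reachable from a behaviour `B` by taking subterms and unfolding procedure
calls is finite; hence the set of networks (finite maps from a fixed finite
set of processes to reachable behaviours) visited by symbolic execution is
finite. -/
theorem stmt12 {P L E X : Type*} [Finite X] [Finite P]
    (D : X → Beh P L E X) (B : Beh P L E X) (N : P → Beh P L E X) :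
    {B' | Relation.ReflTransGen (BStep D) B B'}.Finite ∧
    {N' : P → Beh P L E X | ∀ p, Relation.ReflTransGen (BStep D) (N p) (N' p)}.Finite :=
  ⟨finite_setOf_reflTransGen_bStep D B,
    (Set.Finite.pi fun p => finite_setOf_reflTransGen_bStep D (N p)).subset
      fun _ hN' p _ => hN' p⟩
end

section
/- Swapping of independent communications is a congruence generating a confluent rewriting on choreography bodies: the relation generated by rule Eta-Eta (η;η';C ≡ η';η;C when pn(η) ∩ pn(η') = ∅), closed under prefixing and conditional contexts, is symmetric, and any two choreography bodies related by it have the same multiset of interaction prefixes along every maximal path of conditionals. -/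
/-- Choreography bodies: `0`, procedure calls, interaction prefixes `η;C`, and
conditionals at a process `ν` with guard `E`. -/
inductive Ch (η E ν X : Type*) where
  | zero : Ch η E ν X
  | call : X → Ch η E ν X
  | act : η → Ch η E ν X → Ch η E ν X
  | cond : ν → E → Ch η E ν X → Ch η E ν X → Ch η E ν X

/-- The least congruence (w.r.t. prefixing and conditional contexts) generated
by the Eta-Eta swap of adjacent independent interactions, closed under
reflexivity, symmetry and transitivity. -/
inductive EtaEquiv {η E ν X : Type*} (pn : η → Finset ν) :
    Ch η E ν X → Ch η E ν X → Prop
  | swap {h h' : η} {C : Ch η E ν X} : Disjoint (pn h) (pn h') →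
      EtaEquiv pn (.act h (.act h' C)) (.act h' (.act h C))
  | refl (C : Ch η E ν X) : EtaEquiv pn C C
  | symm {C C' : Ch η E ν X} : EtaEquiv pn C C' → EtaEquiv pn C' C
  | trans {C C' C'' : Ch η E ν X} :
      EtaEquiv pn C C' → EtaEquiv pn C' C'' → EtaEquiv pn C C''
  | act (h : η) {C C' : Ch η E ν X} : EtaEquiv pn C C' →
      EtaEquiv pn (.act h C) (.act h C')
  | cond (p : ν) (e : E) {C1 C1' C2 C2' : Ch η E ν X} :
      EtaEquiv pn C1 C1' → EtaEquiv pn C2 C2' →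
      EtaEquiv pn (.cond p e C1 C2) (.cond p e C1' C2')

/-- The multiset of interaction prefixes encountered along the maximal path of
conditionals determined by a branch-choice function `f`. -/
def mlabels {η E ν X : Type*} (f : ν → E → Bool) : Ch η E ν X → Multiset η
  | .zero => 0
  | .call _ => 0
  | .act h C => h ::ₘ mlabels f C
  | .cond p e C1 C2 => if f p e then mlabels f C1 else mlabels f C2

theorem EtaEquiv.mlabels_eq {η E ν X : Type*} {pn : η → Finset ν} {C C' : Ch η E ν X}
    (h : EtaEquiv pn C C') (f : ν → E → Bool) : mlabels f C = mlabels f C' := by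
  induction h with
  | swap _ => exact Multiset.cons_swap _ _ _
  | refl _ => rfl
  | symm _ ih => exact ih.symm
  | trans _ _ ih₁ ih₂ => exact ih₁.trans ih₂
  | act h _ ih => exact congrArg (h ::ₘ ·) ih
  | cond p e _ _ ih₁ ih₂ => simp only [mlabels, ih₁, ih₂]

/-- The Eta-Eta swap congruence is symmetric, and any two choreography bodies
related by it have the same multiset of interaction prefixes along every
maximal path of conditionals. -/
theorem stmt17 {η E ν X : Type*} (pn : η → Finset ν) :
    Symmetric (EtaEquiv pn (E := E) (X := X)) ∧
    ∀ (C C' : Ch η E ν X), EtaEquiv pn C C' →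
      ∀ f : ν → E → Bool, mlabels f C = mlabels f C' :=
  ⟨fun _ _ => EtaEquiv.symm, fun _ _ h => h.mlabels_eq⟩
end
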